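/- Let b : ℝ^d → ℝ^d be a smooth compactly supported vector field and V smooth. Then ∑_{i,j=1}^d ∫ |X_i b_j + X_j b_i|² dx ≥ 2∫ [ |∇b|² + |b|²( (1/4)|∇V|² − (1/2)ΔV − ∑_{i,j}|∂_i∂_j V| ) ] dx, where X_i b_j = (1/2)(∂_i V) b_j + ∂_i b_j. -/

import Mathlib

open MeasureTheory Real

noncomputable def pd {d : ℕ} (f : (Fin d → ℝ) → ℝ) (i : Fin d) (x : Fin d → ℝ) : ℝ :=
  fderiv ℝ f x (Pi.single i 1)

variable {d : ℕ}

lemma pd_smooth {f : (Fin d → ℝ) → ℝ} (hf : ContDiff ℝ (⊤ : ℕ∞) f) (i : Fin d) :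
    ContDiff ℝ (⊤ : ℕ∞) (pd f i) := by
  exact (hf.fderiv_right (by simp)).clm_apply contDiff_const

lemma pd_cont {f : (Fin d → ℝ) → ℝ} (hf : ContDiff ℝ (⊤ : ℕ∞) f) (i : Fin d) :
    Continuous (pd f i) := (pd_smooth hf i).continuous

lemma pd_hcs {f : (Fin d → ℝ) → ℝ} (hf : HasCompactSupport f) (i : Fin d) :
    HasCompactSupport (pd f i) := by
  have h := hf.fderiv (𝕜 := ℝ)
  exact h.comp_left (g := fun L : (Fin d → ℝ) →L[ℝ] ℝ => L (Pi.single i 1)) rfl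

lemma pd_mul {f g : (Fin d → ℝ) → ℝ} (hf : ContDiff ℝ (⊤ : ℕ∞) f) (hg : ContDiff ℝ (⊤ : ℕ∞) g)
    (i : Fin d) (x : Fin d → ℝ) :
    pd (fun y => f y * g y) i x = pd f i x * g x + f x * pd g i x := by
  have := fderiv_fun_mul (𝕜 := ℝ) ((hf.differentiable (by simp)).differentiableAt (x := x))
    ((hg.differentiable (by simp)).differentiableAt)
  simp only [pd, this, ContinuousLinearMap.add_apply, ContinuousLinearMap.coe_smul',
    Pi.smul_apply, smul_eq_mul]
  ring

lemma integrable_cs {f : (Fin d → ℝ) → ℝ} (hf : Continuous f) (hc : HasCompactSupport f) :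
    Integrable f := hf.integrable_of_hasCompactSupport hc

lemma hcs_sum {ι : Type*} (s : Finset ι) (f : ι → (Fin d → ℝ) → ℝ)
    (h : ∀ i, HasCompactSupport (f i)) :
    HasCompactSupport (fun x => ∑ i ∈ s, f i x) := by
  classical
  induction s using Finset.induction_on with
  | empty => simp only [Finset.sum_empty]; exact HasCompactSupport.zero
  | @insert _ _ hx ih =>
      simp only [Finset.sum_insert hx]
      exact (h _).add ih

/-- Integration by parts. -/
lemma ibp {f g : (Fin d → ℝ) → ℝ} (hf : ContDiff ℝ (⊤ : ℕ∞) f) (hg : ContDiff ℝ (⊤ : ℕ∞) g)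
    (hgc : HasCompactSupport g) (i : Fin d) :
    ∫ x, f x * pd g i x = - ∫ x, pd f i x * g x := by
  apply integral_mul_fderiv_eq_neg_fderiv_mul_of_integrable
  · exact integrable_cs ((pd_cont hf i).mul hg.continuous) hgc.mul_left
  · exact integrable_cs (hf.continuous.mul (pd_cont hg i)) (pd_hcs hgc i).mul_left
  · exact integrable_cs (hf.continuous.mul hg.continuous) hgc.mul_left
  · exact fun x _ => (hf.differentiable (by simp)).differentiableAt
  · exact fun x _ => (hg.differentiable (by simp)).differentiableAt

/-- Schwarz symmetry of second partial derivatives. -/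
lemma pd_comm {f : (Fin d → ℝ) → ℝ} (hf : ContDiff ℝ (⊤ : ℕ∞) f) (i j : Fin d) (x : Fin d → ℝ) :
    pd (pd f i) j x = pd (pd f j) i x := by
  have hsymm : IsSymmSndFDerivAt ℝ f x := hf.contDiffAt.isSymmSndFDerivAt (by rw [minSmoothness_of_isRCLikeNormedField]; exact WithTop.coe_le_coe.mpr (le_top : (2 : ℕ∞) ≤ ⊤))
  have hd : ∀ k : Fin d, fderiv ℝ (pd f k) x
      = (fderiv ℝ (fderiv ℝ f) x).flip (Pi.single k 1) := by
    intro k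
    have hc : DifferentiableAt ℝ (fderiv ℝ f) x :=
      ((hf.fderiv_right (m := (⊤ : ℕ∞)) (by simp)).differentiable (by simp)).differentiableAt
    have h2 := fderiv_clm_apply (c := fderiv ℝ f) (u := fun _ => (Pi.single k 1 : Fin d → ℝ))
      hc (differentiableAt_const _)
    show fderiv ℝ (fun y => fderiv ℝ f y (Pi.single k 1)) x = _
    simpa using h2
  simp only [pd, hd, ContinuousLinearMap.flip_apply]
  exact hsymm _ _

lemma hcs_mul {f g : (Fin d → ℝ) → ℝ} (h : HasCompactSupport g) :
    HasCompactSupport (fun x => f x * g x) := h.mul_left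

lemma hcs_sq {f : (Fin d → ℝ) → ℝ} (h : HasCompactSupport f) :
    HasCompactSupport (fun x => f x ^ 2) :=
  h.comp_left (g := fun t : ℝ => t ^ 2) (by simp)

lemma sum_sum_integral {F : Fin d → Fin d → (Fin d → ℝ) → ℝ}
    (h : ∀ i j, Integrable (F i j)) :
    ∑ i, ∑ j, ∫ x, F i j x = ∫ x, ∑ i, ∑ j, F i j x :=
  calc ∑ i, ∑ j, ∫ x, F i j x
      = ∑ i, ∫ x, ∑ j, F i j x :=
        Finset.sum_congr rfl fun i _ => (integral_finset_sum _ fun j _ => h i j).symm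
    _ = ∫ x, ∑ i, ∑ j, F i j x :=
        (integral_finset_sum _ fun i _ => integrable_finset_sum _ fun j _ => h i j).symm

lemma integral_add3 {f1 f2 f3 : (Fin d → ℝ) → ℝ} (h1 : Integrable f1)
    (h2 : Integrable f2) (h3 : Integrable f3) :
    ∫ x, (f1 x + f2 x + f3 x) = (∫ x, f1 x) + (∫ x, f2 x) + ∫ x, f3 x := by
  have h12 : Integrable (fun x => f1 x + f2 x) := h1.add h2
  rw [integral_add h12 h3, integral_add h1 h2]

lemma integral_add4 {f1 f2 f3 f4 : (Fin d → ℝ) → ℝ} (h1 : Integrable f1)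
    (h2 : Integrable f2) (h3 : Integrable f3) (h4 : Integrable f4) :
    ∫ x, (f1 x + f2 x + f3 x + f4 x)
      = (∫ x, f1 x) + (∫ x, f2 x) + (∫ x, f3 x) + ∫ x, f4 x := by
  have h12 : Integrable (fun x => f1 x + f2 x) := h1.add h2
  have h13 : Integrable (fun x => f1 x + f2 x + f3 x) := h12.add h3
  rw [integral_add h13 h4, integral_add h12 h3, integral_add h1 h2]

lemma integral_add6 {f1 f2 f3 f4 f5 f6 : (Fin d → ℝ) → ℝ} (h1 : Integrable f1)
    (h2 : Integrable f2) (h3 : Integrable f3) (h4 : Integrable f4)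
    (h5 : Integrable f5) (h6 : Integrable f6) :
    ∫ x, (f1 x + f2 x + f3 x + f4 x + f5 x + f6 x)
      = (∫ x, f1 x) + (∫ x, f2 x) + (∫ x, f3 x) + (∫ x, f4 x) + (∫ x, f5 x) + ∫ x, f6 x := by
  have h12 : Integrable (fun x => f1 x + f2 x) := h1.add h2
  have h13 : Integrable (fun x => f1 x + f2 x + f3 x) := h12.add h3
  have h14 : Integrable (fun x => f1 x + f2 x + f3 x + f4 x) := h13.add h4
  have h15 : Integrable (fun x => f1 x + f2 x + f3 x + f4 x + f5 x) := h14.add h5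
  rw [integral_add h15 h6, integral_add h14 h5, integral_add h13 h4,
    integral_add h12 h3, integral_add h1 h2]

/-- `∫ ∂ᵢV · β · ∂ᵢβ = -(1/2) ∫ ∂ᵢ∂ᵢV · β²`. -/
lemma ibpA {V β : (Fin d → ℝ) → ℝ} (hV : ContDiff ℝ (⊤ : ℕ∞) V) (hβ : ContDiff ℝ (⊤ : ℕ∞) β)
    (hβc : HasCompactSupport β) (i : Fin d) :
    ∫ x, pd V i x * β x * pd β i x = -(1/2) * ∫ x, pd (pd V i) i x * (β x * β x) := by
  have h := ibp (pd_smooth hV i) (hβ.mul hβ) (hcs_mul hβc) i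
  simp_rw [pd_mul hβ hβ] at h
  have h2 : ∫ x, pd V i x * (pd β i x * β x + β x * pd β i x)
      = 2 * ∫ x, pd V i x * β x * pd β i x := by
    rw [← integral_const_mul]
    congr 1; funext x; ring
  rw [h2] at h
  linarith

/-- `∫ ∂ᵢβ · ∂ⱼγ = ∫ ∂ⱼβ · ∂ᵢγ`. -/
lemma ibpB {β γ : (Fin d → ℝ) → ℝ} (hβ : ContDiff ℝ (⊤ : ℕ∞) β)
    (hγ : ContDiff ℝ (⊤ : ℕ∞) γ) (hγc : HasCompactSupport γ) (i j : Fin d) :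
    ∫ x, pd β i x * pd γ j x = ∫ x, pd β j x * pd γ i x := by
  have h1 := ibp (pd_smooth hβ i) hγ hγc j
  have h2 := ibp (pd_smooth hβ j) hγ hγc i
  rw [h1, h2]
  congr 1
  congr 1
  funext x
  rw [pd_comm hβ]

/-- `∫ ∂ᵢV · β · ∂ⱼγ = -∫ (∂ⱼ∂ᵢV · β + ∂ᵢV · ∂ⱼβ) · γ`. -/
lemma ibpC {V β γ : (Fin d → ℝ) → ℝ} (hV : ContDiff ℝ (⊤ : ℕ∞) V) (hβ : ContDiff ℝ (⊤ : ℕ∞) β)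
    (hγ : ContDiff ℝ (⊤ : ℕ∞) γ) (hγc : HasCompactSupport γ) (i j : Fin d) :
    ∫ x, pd V i x * β x * pd γ j x
      = -∫ x, (pd (pd V i) j x * β x + pd V i x * pd β j x) * γ x := by
  have h := ibp ((pd_smooth hV i).mul hβ) hγ hγc j
  simp_rw [pd_mul (pd_smooth hV i) hβ] at h
  exact h

lemma sum_sq_expand (v w : Fin d → ℝ) (u : Fin d → Fin d → ℝ) :
    ∑ i, ∑ j, ((1 / 2 * v i * w j + u i j) + (1 / 2 * v j * w i + u j i)) ^ 2
      = 2 * (∑ i, ∑ j, u i j ^ 2)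
        + (1 / 2) * ((∑ i, v i ^ 2) * (∑ i, w i ^ 2))
        + 2 * (∑ i, ∑ j, v i * w j * u i j)
        + (1 / 2) * (∑ i, v i * w i) ^ 2
        + 2 * (∑ i, ∑ j, v i * w j * u j i)
        + 2 * (∑ i, ∑ j, u i j * u j i) := by
  have hz : ∑ i, ∑ j, ((1/4 * v j ^ 2 * w i ^ 2 + u j i ^ 2 + v j * w i * u j i
        + v j * w i * u i j)
      - (1/4 * v i ^ 2 * w j ^ 2 + u i j ^ 2 + v i * w j * u i j + v i * w j * u j i)) = 0 := by
    simp only [Finset.sum_sub_distrib]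
    rw [Finset.sum_comm]
    exact sub_self _
  have c1 : (2:ℝ) * (∑ i, ∑ j, u i j ^ 2) = ∑ i, ∑ j, 2 * u i j ^ 2 := by
    simp [Finset.mul_sum]
  have c2 : (1/2 : ℝ) * ((∑ i, v i ^ 2) * (∑ i, w i ^ 2))
      = ∑ i, ∑ j, (1/2) * (v i ^ 2 * w j ^ 2) := by
    rw [Finset.sum_mul_sum]; simp [Finset.mul_sum]
  have c3 : (2:ℝ) * (∑ i, ∑ j, v i * w j * u i j) = ∑ i, ∑ j, 2 * (v i * w j * u i j) := by
    simp [Finset.mul_sum]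
  have c4 : (1/2 : ℝ) * (∑ i, v i * w i) ^ 2
      = ∑ i, ∑ j, (1/2) * ((v i * w i) * (v j * w j)) := by
    rw [sq, Finset.sum_mul_sum]; simp [Finset.mul_sum]
  have c5 : (2:ℝ) * (∑ i, ∑ j, v i * w j * u j i) = ∑ i, ∑ j, 2 * (v i * w j * u j i) := by
    simp [Finset.mul_sum]
  have c6 : (2:ℝ) * (∑ i, ∑ j, u i j * u j i) = ∑ i, ∑ j, 2 * (u i j * u j i) := by
    simp [Finset.mul_sum]
  rw [c1, c2, c3, c4, c5, c6]
  simp only [← Finset.sum_add_distrib]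
  calc ∑ i, ∑ j, ((1 / 2 * v i * w j + u i j) + (1 / 2 * v j * w i + u j i)) ^ 2
      = ∑ i, ∑ j, ((2 * u i j ^ 2 + (1/2) * (v i ^ 2 * w j ^ 2) + 2 * (v i * w j * u i j)
            + (1/2) * ((v i * w i) * (v j * w j)) + 2 * (v i * w j * u j i)
            + 2 * (u i j * u j i))
          + ((1/4 * v j ^ 2 * w i ^ 2 + u j i ^ 2 + v j * w i * u j i + v j * w i * u i j)
            - (1/4 * v i ^ 2 * w j ^ 2 + u i j ^ 2 + v i * w j * u i j + v i * w j * u j i))) :=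
        Finset.sum_congr rfl fun i _ => Finset.sum_congr rfl fun j _ => by ring
    _ = (∑ i, ∑ j, (2 * u i j ^ 2 + (1/2) * (v i ^ 2 * w j ^ 2) + 2 * (v i * w j * u i j)
            + (1/2) * ((v i * w i) * (v j * w j)) + 2 * (v i * w j * u j i)
            + 2 * (u i j * u j i)))
          + ∑ i, ∑ j, ((1/4 * v j ^ 2 * w i ^ 2 + u j i ^ 2 + v j * w i * u j i + v j * w i * u i j)
            - (1/4 * v i ^ 2 * w j ^ 2 + u i j ^ 2 + v i * w j * u i j + v i * w j * u j i)) := by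
        simp only [Finset.sum_add_distrib]
    _ = ∑ i, ∑ j, (2 * u i j ^ 2 + (1/2) * (v i ^ 2 * w j ^ 2) + 2 * (v i * w j * u i j)
            + (1/2) * ((v i * w i) * (v j * w j)) + 2 * (v i * w j * u j i)
            + 2 * (u i j * u j i)) := by
        rw [hz, add_zero]

/-- `∑_{ij} ∫ |X_i b_j + X_j b_i|² ≥
    2 ∫ [ |∇b|² + |b|²((1/4)|∇V|² − (1/2)ΔV − ∑_{ij}|∂_i∂_j V|) ]`,
where `X_i f = (1/2)(∂_i V) f + ∂_i f`. -/
theorem stmt3 {d : ℕ} (V : (Fin d → ℝ) → ℝ) (hV : ContDiff ℝ (⊤ : ℕ∞) V)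
    (b : Fin d → (Fin d → ℝ) → ℝ) (hb : ∀ i, ContDiff ℝ (⊤ : ℕ∞) (b i))
    (hbc : ∀ i, HasCompactSupport (b i)) :
    (∑ i, ∑ j, ∫ x, (((1 / 2) * pd V i x * b j x + pd (b j) i x) +
        ((1 / 2) * pd V j x * b i x + pd (b i) j x)) ^ 2) ≥
      2 * ∫ x, ((∑ i, ∑ j, (pd (b j) i x) ^ 2) +
        (∑ i, (b i x) ^ 2) * ((1 / 4) * (∑ i, (pd V i x) ^ 2)
          - (1 / 2) * (∑ i, pd (pd V i) i x)
          - ∑ i, ∑ j, |pd (pd V j) i x|)) := by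
  classical
  -- continuity / compact support basics
  have hbC : ∀ i, Continuous (b i) := fun i => (hb i).continuous
  have hVC : ∀ i, Continuous (pd V i) := fun i => pd_cont hV i
  have hVVC : ∀ i j, Continuous (pd (pd V i) j) := fun i j => pd_cont (pd_smooth hV i) j
  have huC : ∀ i j, Continuous (pd (b j) i) := fun i j => pd_cont (hb j) i
  have huH : ∀ i j, HasCompactSupport (pd (b j) i) := fun i j => pd_hcs (hbc j) i
  have hSbC : Continuous (fun x => ∑ i, b i x ^ 2) :=
    continuous_finset_sum _ fun i _ => (hbC i).pow 2
  have hSbH : HasCompactSupport (fun x => ∑ i, b i x ^ 2) :=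
    hcs_sum _ _ fun i => hcs_sq (hbc i)
  have hSvC : Continuous (fun x => ∑ i, pd V i x ^ 2) :=
    continuous_finset_sum _ fun i _ => (hVC i).pow 2
  have hDC : Continuous (fun x => ∑ i, pd (b i) i x) :=
    continuous_finset_sum _ fun i _ => huC i i
  have hDH : HasCompactSupport (fun x => ∑ i, pd (b i) i x) :=
    hcs_sum _ _ fun i => huH i i
  have hWC : Continuous (fun x => ∑ i, pd V i x * b i x) :=
    continuous_finset_sum _ fun i _ => (hVC i).mul (hbC i)
  have hWH : HasCompactSupport (fun x => ∑ i, pd V i x * b i x) :=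
    hcs_sum _ _ fun i => hcs_mul (hbc i)
  have hLapC : Continuous (fun x => ∑ i, pd (pd V i) i x) :=
    continuous_finset_sum _ fun i _ => hVVC i i
  have hAbsC : Continuous (fun x => ∑ i, ∑ j, |pd (pd V j) i x|) :=
    continuous_finset_sum _ fun i _ => continuous_finset_sum _ fun j _ => (hVVC j i).abs
  -- integrability facts
  have intA : ∀ i j, Integrable (fun x => (((1 / 2) * pd V i x * b j x + pd (b j) i x) +
      ((1 / 2) * pd V j x * b i x + pd (b i) j x)) ^ 2) := by
    intro i j
    refine integrable_cs (Continuous.pow ?_ 2) (hcs_sq ?_)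
    · exact (((continuous_const.mul (hVC i)).mul (hbC j)).add (huC i j)).add
        (((continuous_const.mul (hVC j)).mul (hbC i)).add (huC j i))
    · exact ((hcs_mul (hbc j)).add (huH i j)).add ((hcs_mul (hbc i)).add (huH j i))
  have intU2 : ∀ i j, Integrable (fun x => pd (b j) i x ^ 2) := fun i j =>
    integrable_cs ((huC i j).pow 2) (hcs_sq (huH i j))
  have g1sumint : Integrable (fun x => ∑ i, ∑ j, pd (b j) i x ^ 2) :=
    integrable_finset_sum _ fun i _ => integrable_finset_sum _ fun j _ => intU2 i j
  have intVb2 : Integrable (fun x => (∑ i, pd V i x ^ 2) * (∑ i, b i x ^ 2)) :=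
    integrable_cs (hSvC.mul hSbC) (hcs_mul hSbH)
  have int3 : ∀ i j, Integrable (fun x => pd V i x * b j x * pd (b j) i x) := fun i j =>
    integrable_cs (((hVC i).mul (hbC j)).mul (huC i j)) (hcs_mul (huH i j))
  have intW2 : Integrable (fun x => (∑ i, pd V i x * b i x) ^ 2) :=
    integrable_cs (hWC.pow 2) (hcs_sq hWH)
  have int5 : ∀ i j, Integrable (fun x => pd V i x * b j x * pd (b i) j x) := fun i j =>
    integrable_cs (((hVC i).mul (hbC j)).mul (huC j i)) (hcs_mul (huH j i))
  have int6 : ∀ i j, Integrable (fun x => pd (b j) i x * pd (b i) j x) := fun i j =>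
    integrable_cs ((huC i j).mul (huC j i)) (hcs_mul (huH j i))
  have intVbb : ∀ i j, Integrable (fun x => pd (pd V i) i x * (b j x * b j x)) := fun i j =>
    integrable_cs ((hVVC i i).mul ((hbC j).mul (hbC j))) (hcs_mul (hcs_mul (hbc j)))
  have intLap : Integrable (fun x => (∑ i, pd (pd V i) i x) * (∑ i, b i x ^ 2)) :=
    integrable_cs (hLapC.mul hSbC) (hcs_mul hSbH)
  have intDD : ∀ i j, Integrable (fun x => pd (b j) j x * pd (b i) i x) := fun i j =>
    integrable_cs ((huC j j).mul (huC i i)) (hcs_mul (huH i i))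
  have intMix : ∀ i j, Integrable
      (fun x => (pd (pd V i) j x * b j x + pd V i x * pd (b j) j x) * b i x) := fun i j =>
    integrable_cs ((((hVVC i j).mul (hbC j)).add ((hVC i).mul (huC j j))).mul (hbC i))
      (hcs_mul (hbc i))
  have intMa : ∀ i j, Integrable (fun x => pd (pd V i) j x * b j x * b i x) := fun i j =>
    integrable_cs (((hVVC i j).mul (hbC j)).mul (hbC i)) (hcs_mul (hbc i))
  have intMb : ∀ i j, Integrable (fun x => pd V i x * pd (b j) j x * b i x) := fun i j =>
    integrable_cs (((hVC i).mul (huC j j)).mul (hbC i)) (hcs_mul (hbc i))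
  have intJ5 : Integrable (fun x => ∑ i, ∑ j, pd (pd V j) i x * (b i x * b j x)) :=
    integrable_finset_sum _ fun i _ => integrable_finset_sum _ fun j _ =>
      integrable_cs ((hVVC j i).mul ((hbC i).mul (hbC j))) (hcs_mul (hcs_mul (hbc j)))
  have intJ4 : Integrable (fun x => (∑ i, ∑ j, |pd (pd V j) i x|) * (∑ i, b i x ^ 2)) :=
    integrable_cs (hAbsC.mul hSbC) (hcs_mul hSbH)
  have intWD : Integrable (fun x => (∑ i, pd V i x * b i x) * (∑ i, pd (b i) i x)) :=
    integrable_cs (hWC.mul hDC) (hcs_mul hDH)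
  have intD2 : Integrable (fun x => (∑ i, pd (b i) i x) ^ 2) :=
    integrable_cs (hDC.pow 2) (hcs_sq hDH)
  -- Step 1 : expansion of the left-hand side
  have hLHS : (∑ i, ∑ j, ∫ x, (((1 / 2) * pd V i x * b j x + pd (b j) i x) +
        ((1 / 2) * pd V j x * b i x + pd (b i) j x)) ^ 2)
      = 2 * (∫ x, ∑ i, ∑ j, pd (b j) i x ^ 2)
        + (1 / 2) * (∫ x, (∑ i, pd V i x ^ 2) * (∑ i, b i x ^ 2))
        + 2 * (∫ x, ∑ i, ∑ j, pd V i x * b j x * pd (b j) i x)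
        + (1 / 2) * (∫ x, (∑ i, pd V i x * b i x) ^ 2)
        + 2 * (∫ x, ∑ i, ∑ j, pd V i x * b j x * pd (b i) j x)
        + 2 * (∫ x, ∑ i, ∑ j, pd (b j) i x * pd (b i) j x) := by
    rw [sum_sum_integral intA]
    calc ∫ x, ∑ i, ∑ j, (((1 / 2) * pd V i x * b j x + pd (b j) i x) +
          ((1 / 2) * pd V j x * b i x + pd (b i) j x)) ^ 2
        = ∫ x, (2 * (∑ i, ∑ j, pd (b j) i x ^ 2)
            + (1 / 2) * ((∑ i, pd V i x ^ 2) * (∑ i, b i x ^ 2))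
            + 2 * (∑ i, ∑ j, pd V i x * b j x * pd (b j) i x)
            + (1 / 2) * (∑ i, pd V i x * b i x) ^ 2
            + 2 * (∑ i, ∑ j, pd V i x * b j x * pd (b i) j x)
            + 2 * (∑ i, ∑ j, pd (b j) i x * pd (b i) j x)) := by
          congr 1; funext x
          exact sum_sq_expand (fun i => pd V i x) (fun i => b i x) (fun i j => pd (b j) i x)
      _ = 2 * (∫ x, ∑ i, ∑ j, pd (b j) i x ^ 2)
            + (1 / 2) * (∫ x, (∑ i, pd V i x ^ 2) * (∑ i, b i x ^ 2))
            + 2 * (∫ x, ∑ i, ∑ j, pd V i x * b j x * pd (b j) i x)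
            + (1 / 2) * (∫ x, (∑ i, pd V i x * b i x) ^ 2)
            + 2 * (∫ x, ∑ i, ∑ j, pd V i x * b j x * pd (b i) j x)
            + 2 * (∫ x, ∑ i, ∑ j, pd (b j) i x * pd (b i) j x) := by
          rw [integral_add6 (g1sumint.const_mul 2) (intVb2.const_mul (1/2))
            ((integrable_finset_sum _ fun i _ => integrable_finset_sum _ fun j _ =>
              int3 i j).const_mul 2)
            (intW2.const_mul (1/2))
            ((integrable_finset_sum _ fun i _ => integrable_finset_sum _ fun j _ =>
              int5 i j).const_mul 2)
            ((integrable_finset_sum _ fun i _ => integrable_finset_sum _ fun j _ =>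
              int6 i j).const_mul 2)]
          simp only [integral_const_mul]
  -- Step 2 : the three integration-by-parts identities
  have hT3 : (∫ x, ∑ i, ∑ j, pd V i x * b j x * pd (b j) i x)
      = -((1/2) * ∫ x, (∑ i, pd (pd V i) i x) * (∑ i, b i x ^ 2)) := by
    rw [← sum_sum_integral int3]
    calc ∑ i, ∑ j, ∫ x, pd V i x * b j x * pd (b j) i x
        = ∑ i, ∑ j, (-(1/2) * ∫ x, pd (pd V i) i x * (b j x * b j x)) :=
          Finset.sum_congr rfl fun i _ => Finset.sum_congr rfl fun j _ =>
            ibpA hV (hb j) (hbc j) i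
      _ = -((1/2) * ∑ i, ∑ j, ∫ x, pd (pd V i) i x * (b j x * b j x)) := by
          simp only [neg_mul, Finset.sum_neg_distrib, ← Finset.mul_sum]
      _ = -((1/2) * ∫ x, ∑ i, ∑ j, pd (pd V i) i x * (b j x * b j x)) := by
          rw [sum_sum_integral intVbb]
      _ = -((1/2) * ∫ x, (∑ i, pd (pd V i) i x) * (∑ i, b i x ^ 2)) := by
          have e : (∫ x, ∑ i, ∑ j, pd (pd V i) i x * (b j x * b j x))
              = ∫ x, (∑ i, pd (pd V i) i x) * (∑ i, b i x ^ 2) := by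
            congr 1; funext x
            rw [Finset.sum_mul_sum]
            exact Finset.sum_congr rfl fun i _ => Finset.sum_congr rfl fun j _ => by ring
          rw [e]
  have hT6 : (∫ x, ∑ i, ∑ j, pd (b j) i x * pd (b i) j x)
      = ∫ x, (∑ i, pd (b i) i x) ^ 2 := by
    rw [← sum_sum_integral int6]
    calc ∑ i, ∑ j, ∫ x, pd (b j) i x * pd (b i) j x
        = ∑ i, ∑ j, ∫ x, pd (b j) j x * pd (b i) i x :=
          Finset.sum_congr rfl fun i _ => Finset.sum_congr rfl fun j _ =>
            ibpB (hb j) (hb i) (hbc i) i j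
      _ = ∫ x, ∑ i, ∑ j, pd (b j) j x * pd (b i) i x := sum_sum_integral intDD
      _ = ∫ x, (∑ i, pd (b i) i x) ^ 2 := by
          congr 1; funext x
          rw [sq, Finset.sum_mul_sum]
          exact Finset.sum_congr rfl fun i _ => Finset.sum_congr rfl fun j _ => by ring
  have hMa : (∫ x, ∑ i, ∑ j, pd (pd V i) j x * b j x * b i x)
      = ∫ x, ∑ i, ∑ j, pd (pd V j) i x * (b i x * b j x) := by
    congr 1; funext x
    exact Finset.sum_congr rfl fun i _ => Finset.sum_congr rfl fun j _ => by
      rw [pd_comm hV i j x]; ring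
  have hMb : (∫ x, ∑ i, ∑ j, pd V i x * pd (b j) j x * b i x)
      = ∫ x, (∑ i, pd V i x * b i x) * (∑ i, pd (b i) i x) := by
    congr 1; funext x
    rw [Finset.sum_mul_sum]
    exact Finset.sum_congr rfl fun i _ => Finset.sum_congr rfl fun j _ => by ring
  have hT5 : (∫ x, ∑ i, ∑ j, pd V i x * b j x * pd (b i) j x)
      = -((∫ x, ∑ i, ∑ j, pd (pd V j) i x * (b i x * b j x))
          + ∫ x, (∑ i, pd V i x * b i x) * (∑ i, pd (b i) i x)) := by
    rw [← sum_sum_integral int5]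
    calc ∑ i, ∑ j, ∫ x, pd V i x * b j x * pd (b i) j x
        = ∑ i, ∑ j, -∫ x, (pd (pd V i) j x * b j x + pd V i x * pd (b j) j x) * b i x :=
          Finset.sum_congr rfl fun i _ => Finset.sum_congr rfl fun j _ =>
            ibpC hV (hb j) (hb i) (hbc i) i j
      _ = -∑ i, ∑ j, ∫ x, (pd (pd V i) j x * b j x + pd V i x * pd (b j) j x) * b i x := by
          simp only [Finset.sum_neg_distrib]
      _ = -∫ x, ∑ i, ∑ j, (pd (pd V i) j x * b j x + pd V i x * pd (b j) j x) * b i x := by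
          rw [sum_sum_integral intMix]
      _ = -((∫ x, ∑ i, ∑ j, pd (pd V i) j x * b j x * b i x)
            + ∫ x, ∑ i, ∑ j, pd V i x * pd (b j) j x * b i x) := by
          congr 1
          rw [← integral_add
            (integrable_finset_sum _ fun i _ => integrable_finset_sum _ fun j _ => intMa i j)
            (integrable_finset_sum _ fun i _ => integrable_finset_sum _ fun j _ => intMb i j)]
          congr 1; funext x
          simp only [← Finset.sum_add_distrib]
          exact Finset.sum_congr rfl fun i _ => Finset.sum_congr rfl fun j _ => by ring
      _ = -((∫ x, ∑ i, ∑ j, pd (pd V j) i x * (b i x * b j x))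
            + ∫ x, (∑ i, pd V i x * b i x) * (∑ i, pd (b i) i x)) := by
          rw [hMa, hMb]
  -- Step 3 : expansion of the right-hand side
  have hRHS : (∫ x, ((∑ i, ∑ j, (pd (b j) i x) ^ 2) +
        (∑ i, (b i x) ^ 2) * ((1 / 4) * (∑ i, (pd V i x) ^ 2)
          - (1 / 2) * (∑ i, pd (pd V i) i x)
          - ∑ i, ∑ j, |pd (pd V j) i x|))
      = (∫ x, ∑ i, ∑ j, pd (b j) i x ^ 2)
        + (1/4) * (∫ x, (∑ i, pd V i x ^ 2) * (∑ i, b i x ^ 2))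
        - (1/2) * (∫ x, (∑ i, pd (pd V i) i x) * (∑ i, b i x ^ 2))
        - (∫ x, (∑ i, ∑ j, |pd (pd V j) i x|) * (∑ i, b i x ^ 2))) := by
    calc ∫ x, ((∑ i, ∑ j, (pd (b j) i x) ^ 2) +
          (∑ i, (b i x) ^ 2) * ((1 / 4) * (∑ i, (pd V i x) ^ 2)
            - (1 / 2) * (∑ i, pd (pd V i) i x)
            - ∑ i, ∑ j, |pd (pd V j) i x|))
        = ∫ x, ((∑ i, ∑ j, pd (b j) i x ^ 2)
            + (1/4) * ((∑ i, pd V i x ^ 2) * (∑ i, b i x ^ 2))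
            + -((1/2) * ((∑ i, pd (pd V i) i x) * (∑ i, b i x ^ 2)))
            + -((∑ i, ∑ j, |pd (pd V j) i x|) * (∑ i, b i x ^ 2))) := by
          congr 1; funext x; ring
      _ = (∫ x, ∑ i, ∑ j, pd (b j) i x ^ 2)
            + (1/4) * (∫ x, (∑ i, pd V i x ^ 2) * (∑ i, b i x ^ 2))
            - (1/2) * (∫ x, (∑ i, pd (pd V i) i x) * (∑ i, b i x ^ 2))
            - (∫ x, (∑ i, ∑ j, |pd (pd V j) i x|) * (∑ i, b i x ^ 2)) := by
          have intLapN : Integrable (fun x =>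
              -((1/2) * ((∑ i, pd (pd V i) i x) * (∑ i, b i x ^ 2)))) :=
            (intLap.const_mul (1/2)).neg
          have intJ4N : Integrable (fun x =>
              -((∑ i, ∑ j, |pd (pd V j) i x|) * (∑ i, b i x ^ 2))) := intJ4.neg
          rw [integral_add4 g1sumint (intVb2.const_mul (1/4)) intLapN intJ4N]
          rw [integral_neg, integral_neg, integral_const_mul, integral_const_mul]
          ring
  -- Step 4 : the two nonnegative remainder terms
  have hQ : (∫ x, ((∑ i, pd (b i) i x) - (1/2) * (∑ i, pd V i x * b i x)) ^ 2)
      = (∫ x, (∑ i, pd (b i) i x) ^ 2)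
        - (∫ x, (∑ i, pd V i x * b i x) * (∑ i, pd (b i) i x))
        + (1/4) * (∫ x, (∑ i, pd V i x * b i x) ^ 2) := by
    calc ∫ x, ((∑ i, pd (b i) i x) - (1/2) * (∑ i, pd V i x * b i x)) ^ 2
        = ∫ x, ((∑ i, pd (b i) i x) ^ 2
            + -((∑ i, pd V i x * b i x) * (∑ i, pd (b i) i x))
            + (1/4) * (∑ i, pd V i x * b i x) ^ 2) := by
          congr 1; funext x; ring
      _ = (∫ x, (∑ i, pd (b i) i x) ^ 2)
            - (∫ x, (∑ i, pd V i x * b i x) * (∑ i, pd (b i) i x))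
            + (1/4) * (∫ x, (∑ i, pd V i x * b i x) ^ 2) := by
          have intWDN : Integrable (fun x =>
              -((∑ i, pd V i x * b i x) * (∑ i, pd (b i) i x))) := intWD.neg
          rw [integral_add3 intD2 intWDN (intW2.const_mul (1/4)), integral_neg,
            integral_const_mul]
          ring
  have hQ0 : 0 ≤ ∫ x, ((∑ i, pd (b i) i x) - (1/2) * (∑ i, pd V i x * b i x)) ^ 2 :=
    integral_nonneg fun x => sq_nonneg _
  have hP : (∫ x, (∑ i, ∑ j, |pd (pd V j) i x|) * (∑ i, b i x ^ 2))
        - (∫ x, ∑ i, ∑ j, pd (pd V j) i x * (b i x * b j x))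
      = ∫ x, ∑ i, ∑ j, (|pd (pd V j) i x| * (∑ k, b k x ^ 2)
          - pd (pd V j) i x * (b i x * b j x)) := by
    rw [← integral_sub intJ4 intJ5]
    congr 1; funext x
    simp only [Finset.sum_mul]
    simp only [← Finset.sum_sub_distrib]
  have hP0 : 0 ≤ ∫ x, ∑ i, ∑ j, (|pd (pd V j) i x| * (∑ k, b k x ^ 2)
      - pd (pd V j) i x * (b i x * b j x)) := by
    refine integral_nonneg fun x => Finset.sum_nonneg fun i _ => Finset.sum_nonneg fun j _ => ?_
    have h1 : b i x ^ 2 ≤ ∑ k, b k x ^ 2 :=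
      Finset.single_le_sum (f := fun k => b k x ^ 2) (fun k _ => sq_nonneg _) (Finset.mem_univ i)
    have h2 : b j x ^ 2 ≤ ∑ k, b k x ^ 2 :=
      Finset.single_le_sum (f := fun k => b k x ^ 2) (fun k _ => sq_nonneg _) (Finset.mem_univ j)
    have habs : |b i x * b j x| ≤ ∑ k, b k x ^ 2 := by
      rw [abs_mul]
      nlinarith [sq_nonneg (|b i x| - |b j x|), sq_abs (b i x), sq_abs (b j x),
        abs_nonneg (b i x), abs_nonneg (b j x)]
    have hle : pd (pd V j) i x * (b i x * b j x) ≤ |pd (pd V j) i x| * (∑ k, b k x ^ 2) :=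
      calc pd (pd V j) i x * (b i x * b j x)
          ≤ |pd (pd V j) i x * (b i x * b j x)| := le_abs_self _
        _ = |pd (pd V j) i x| * |b i x * b j x| := abs_mul _ _
        _ ≤ |pd (pd V j) i x| * (∑ k, b k x ^ 2) :=
            mul_le_mul_of_nonneg_left habs (abs_nonneg _)
    linarith
  -- Conclusion
  rw [ge_iff_le, hLHS, hT3, hT5, hT6, hRHS]
  linarith [hQ, hQ0, hP, hP0]
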